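/- The map φ : G₁ → G × G given by φ(g) = (φ_L(g), φ_R(g)) is an injective group homomorphism. -/

import Mathlib

/-- The generator `a = (1,1)α` of the Grigorchuk group, acting on vertex
addresses `List Bool` of the rooted binary tree. -/
def ga : List Bool → List Bool
  | [] => []
  | x :: s => (!x) :: s

mutual
  /-- The generator `b = (a,c)`. -/
  def gb : List Bool → List Bool
    | [] => []
    | false :: s => false :: ga s
    | true :: s => true :: gc s
  /-- The generator `c = (a,d)`. -/
  def gc : List Bool → List Bool
    | [] => []
    | false :: s => false :: ga s
    | true :: s => true :: gd s
  /-- The generator `d = (1,b)`. -/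
  def gd : List Bool → List Bool
    | [] => []
    | false :: s => false :: s
    | true :: s => true :: gb s
end

/-- The Grigorchuk group `G = ⟨a,b,c,d⟩`, as the submonoid of the endomorphism
monoid of the tree generated by `a, b, c, d` (since these are involutions, this
submonoid is the Grigorchuk group). -/
def Grig : Submonoid (Function.End (List Bool)) :=
  Submonoid.closure {ga, gb, gc, gd}

/-- `f` fixes the first level of the tree. The elements of `Grig` satisfying
this form the level-1 stabiliser `G₁`. -/
def FixesLevelOne (f : Function.End (List Bool)) : Prop :=
  ∀ (x : Bool) (s : List Bool), ∃ s' : List Bool, f (x :: s) = x :: s'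

/-- The left section `φ_L(f)`: the automorphism induced on the left subtree. -/
def sectL (f : Function.End (List Bool)) : Function.End (List Bool) :=
  fun s => (f (false :: s)).tail

/-- The right section `φ_R(f)`: the automorphism induced on the right subtree. -/
def sectR (f : Function.End (List Bool)) : Function.End (List Bool) :=
  fun s => (f (true :: s)).tail

/-!
Each generator permutes the first level by a fixed permutation and has its sections among
`1, a, b, c, d`. Both properties pass to products, since the sections of `f * g` are products
of sections of `f` and `g`; so every element of `G` has sections in `G`. On `G₁` the root
permutation is trivial, so sections of a product are products of sections, and an element
fixing the root is determined by its two sections.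
-/

/-- `sectL = sect false` and `sectR = sect true` definitionally. -/
def sect (x : Bool) (f : Function.End (List Bool)) : Function.End (List Bool) :=
  fun s => (f (x :: s)).tail

/-- `f = (sect false f, sect true f) σ` in wreath recursion notation. -/
def HasRootAction (σ : Bool → Bool) (f : Function.End (List Bool)) : Prop :=
  ∀ x s, f (x :: s) = σ x :: sect x f s

namespace HasRootAction

variable {σ τ : Bool → Bool} {f g : Function.End (List Bool)}

theorem sect_mul (hg : HasRootAction σ g) (x : Bool) :
    sect x (f * g) = sect (σ x) f * sect x g := by
  funext s
  change (f (g (x :: s))).tail = (f (σ x :: sect x g s)).tail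
  rw [hg x s]

theorem mul (hf : HasRootAction τ f) (hg : HasRootAction σ g) :
    HasRootAction (τ ∘ σ) (f * g) := by
  intro x s
  change f (g (x :: s)) = _
  rw [hg x s, hf (σ x), hg.sect_mul x]
  rfl

theorem ext (hf : HasRootAction σ f) (hg : HasRootAction σ g) (hnil : f [] = g [])
    (hsect : ∀ x, sect x f = sect x g) : f = g := by
  funext l
  cases l with
  | nil => exact hnil
  | cons x s => rw [hf x s, hg x s, hsect x]

end HasRootAction

theorem FixesLevelOne.hasRootAction_id {f : Function.End (List Bool)} (hf : FixesLevelOne f) :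
    HasRootAction id f := by
  intro x s
  obtain ⟨s', hs'⟩ := hf x s
  simp only [sect, hs', List.tail_cons, id]

def grigSelfSimilar : Submonoid (Function.End (List Bool)) where
  carrier := {f | ∃ σ, HasRootAction σ f ∧ ∀ x, sect x f ∈ Grig}
  one_mem' := ⟨id, fun _ _ => rfl, fun _ => one_mem Grig⟩
  mul_mem' := by
    rintro f g ⟨τ, hf, hfG⟩ ⟨σ, hg, hgG⟩
    refine ⟨τ ∘ σ, hf.mul hg, fun x => ?_⟩
    rw [hg.sect_mul x]
    exact mul_mem (hfG _) (hgG x)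

theorem ga_mem_grig : ga ∈ Grig := Submonoid.subset_closure (Or.inl rfl)
theorem gb_mem_grig : gb ∈ Grig := Submonoid.subset_closure (Or.inr (Or.inl rfl))
theorem gc_mem_grig : gc ∈ Grig := Submonoid.subset_closure (Or.inr (Or.inr (Or.inl rfl)))
theorem gd_mem_grig : gd ∈ Grig := Submonoid.subset_closure (Or.inr (Or.inr (Or.inr rfl)))

theorem grig_le_grigSelfSimilar : Grig ≤ grigSelfSimilar := by
  refine Submonoid.closure_le.mpr ?_
  rintro f (rfl | rfl | rfl | rfl)
  · refine ⟨not, fun x _ => by cases x <;> rfl, fun x => ?_⟩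
    exact (funext fun s => by cases x <;> rfl : sect x ga = 1) ▸ one_mem Grig
  · exact ⟨id, fun x _ => by cases x <;> rfl, Bool.forall_bool.mpr ⟨ga_mem_grig, gc_mem_grig⟩⟩
  · exact ⟨id, fun x _ => by cases x <;> rfl, Bool.forall_bool.mpr ⟨ga_mem_grig, gd_mem_grig⟩⟩
  · exact ⟨id, fun x _ => by cases x <;> rfl, Bool.forall_bool.mpr ⟨one_mem Grig, gb_mem_grig⟩⟩

theorem grig_le_stabilizer_nil :
    Grig ≤ MulAction.stabilizerSubmonoid (Function.End (List Bool)) ([] : List Bool) := by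
  refine Submonoid.closure_le.mpr ?_
  rintro f (rfl | rfl | rfl | rfl) <;> rfl

/-- the map `φ = (φ_L, φ_R) : G₁ → G × G` is a well-defined
injective group homomorphism: the sections of an element of `G₁` again lie in
`G`, `φ` is multiplicative, and `φ` is injective. -/
theorem stmt_10 :
    (∀ f ∈ Grig, FixesLevelOne f → sectL f ∈ Grig ∧ sectR f ∈ Grig) ∧
    (∀ f ∈ Grig, ∀ g ∈ Grig, FixesLevelOne f → FixesLevelOne g →
      sectL (f * g) = sectL f * sectL g ∧ sectR (f * g) = sectR f * sectR g) ∧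
    (∀ f ∈ Grig, ∀ g ∈ Grig, FixesLevelOne f → FixesLevelOne g →
      sectL f = sectL g → sectR f = sectR g → f = g) := by
  refine ⟨fun f hf _ => ?_, fun f _ g _ _ hg => ?_, fun f hf g hg hf₁ hg₁ hL hR => ?_⟩
  · obtain ⟨_, _, hsect⟩ := grig_le_grigSelfSimilar hf
    exact ⟨hsect false, hsect true⟩
  · exact ⟨hg.hasRootAction_id.sect_mul false, hg.hasRootAction_id.sect_mul true⟩
  · refine hf₁.hasRootAction_id.ext hg₁.hasRootAction_id ?_ (Bool.forall_bool.mpr ⟨hL, hR⟩)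
    exact (grig_le_stabilizer_nil hf).trans (grig_le_stabilizer_nil hg).symm
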